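/- arXiv:1812.10938 — 7 statements merged into one kernel-verified Lean document; each statement's English description precedes it below -/
import Mathlib

section
/- Define ξ₂ : [0,∞) → (0,1] by ξ₂(t) = e^{−t}(1 + t). Then for 2e⁻¹ ≤ t ≤ 1, the inverse satisfies ξ₂⁻¹(t) ≤ √(2 log t⁻¹ + 10 (log t⁻¹)^{3/2}), and for 0 < t ≤ 2e⁻¹, ξ₂⁻¹(t) ≤ log t⁻¹ + log(1 + 4 log t⁻¹). -/
noncomputable def xi₂ (t : ℝ) : ℝ := Real.exp (-t) * (1 + t)

/-!
If `t = ξ₂ x` then `z := log t⁻¹ = x - log (1 + x)`. Since `ξ₂` is strictly decreasing on `[0, ∞)`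
with `ξ₂ 1 = 2 / e`, the first regime is `x ≤ 1` and the second `x ≥ 1`.
For `x ≤ 1` the cubic Taylor bound `log (1 + x) ≤ x - x²/2 + x³/3` gives
`z ≥ x²/2 - x³/3 ≥ x²/6`, hence `x² ≤ 2z + 2x³/3 ≤ 2z + 10 z^{3/2}`.
For `x ≥ 1` the chord bound `log (1 + x) ≤ x log 2` gives `x ≤ 4z`, hence
`x = z + log (1 + x) ≤ z + log (1 + 4z)`.
-/

open Real Set

lemma log_one_add_le_cubic {x : ℝ} (hx : 0 ≤ x) : log (1 + x) ≤ x - x ^ 2 / 2 + x ^ 3 / 3 := by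
  let f : ℝ → ℝ := fun y ↦ y - y ^ 2 / 2 + y ^ 3 / 3 - log (1 + y)
  have hderiv : ∀ y ∈ interior (Ici (0 : ℝ)),
      HasDerivWithinAt f (1 - y + y ^ 2 - (1 + y)⁻¹) (interior (Ici 0)) y := by
    intro y hy
    rw [interior_Ici, mem_Ioi] at hy
    have hlog := ((hasDerivAt_id y).const_add 1).log (by simp only [id]; linarith)
    have hpoly := ((hasDerivAt_id y).sub ((hasDerivAt_pow 2 y).div_const 2)).add
      ((hasDerivAt_pow 3 y).div_const 3)
    refine ((hpoly.sub hlog).congr_deriv ?_).hasDerivWithinAt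
    simp only [id]
    field_simp
    ring
  have hmono : MonotoneOn f (Ici 0) := by
    refine monotoneOn_of_hasDerivWithinAt_nonneg (convex_Ici 0) ?_ hderiv ?_
    · have : ∀ y ∈ Ici (0 : ℝ), 1 + y ≠ 0 := fun y hy ↦ by simp only [mem_Ici] at hy; linarith
      fun_prop (disch := assumption)
    · intro y hy
      rw [interior_Ici, mem_Ioi] at hy
      -- `(1 - y + y²)(1 + y) = 1 + y³`
      rw [sub_nonneg, inv_le_iff_one_le_mul₀ (by linarith)]
      nlinarith [pow_pos hy 3]
  have := hmono self_mem_Ici hx hx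
  simp only [f] at this
  norm_num at this
  linarith

lemma log_one_add_le_mul_log_two {x : ℝ} (hx : 1 ≤ x) : log (1 + x) ≤ x * log 2 := by
  have h : 1 + x ≤ (2 : ℝ) ^ x := by
    have := one_add_mul_self_le_rpow_one_add (by norm_num : (-1 : ℝ) ≤ 1) hx
    norm_num at this
    exact this
  calc log (1 + x) ≤ log ((2 : ℝ) ^ x) := log_le_log (by linarith) h
    _ = x * log 2 := log_rpow two_pos x

lemma strictAntiOn_xi₂ : StrictAntiOn xi₂ (Ici 0) := by
  refine strictAntiOn_of_hasDerivWithinAt_neg (f' := fun x ↦ -(x * exp (-x))) (convex_Ici 0)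
    (by unfold xi₂; fun_prop) (fun x _ ↦ ?_) (fun x hx ↦ ?_)
  · have := ((hasDerivAt_neg x).exp.mul ((hasDerivAt_id x).const_add 1))
    refine (this.congr_deriv ?_).hasDerivWithinAt
    simp only [id]
    ring
  · rw [interior_Ici, mem_Ioi] at hx
    simp only [neg_lt_zero]
    positivity

lemma xi₂_one : xi₂ 1 = 2 / exp 1 := by
  rw [xi₂, exp_neg]; ring

lemma log_inv_xi₂ {x : ℝ} (hx : -1 < x) : log (xi₂ x)⁻¹ = x - log (1 + x) := by
  rw [log_inv, xi₂, log_mul (exp_ne_zero _) (by linarith), log_exp]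
  ring

lemma sq_le_sub_log_one_add_bound {x : ℝ} (hx₀ : 0 ≤ x) (hx₁ : x ≤ 1) :
    x ^ 2 ≤ 2 * (x - log (1 + x)) + 10 * (x - log (1 + x)) ^ ((3 : ℝ) / 2) := by
  set z := x - log (1 + x)
  have hz : x ^ 2 / 2 - x ^ 3 / 3 ≤ z := by linarith [log_one_add_le_cubic hx₀]
  have hz6 : x ^ 2 / 6 ≤ z := by nlinarith
  have hz32 : z ^ ((3 : ℝ) / 2) = √(z ^ 3) := by
    rw [sqrt_eq_rpow, ← rpow_natCast, ← rpow_mul (by nlinarith)]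
    norm_num
  have hcube : x ^ 3 / 15 ≤ √(z ^ 3) := by
    rw [← sqrt_sq (by positivity : 0 ≤ x ^ 3 / 15)]
    gcongr
    nlinarith [pow_le_pow_left₀ (by positivity) hz6 3]
  rw [hz32]
  nlinarith

lemma le_four_mul_sub_log_one_add {x : ℝ} (hx : 1 ≤ x) : x ≤ 4 * (x - log (1 + x)) := by
  nlinarith [log_one_add_le_mul_log_two hx, log_two_lt_d9]

theorem stmt4 (t x : ℝ) (hx : 0 ≤ x) (hxt : xi₂ x = t) :
    (2 / Real.exp 1 ≤ t → t ≤ 1 →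
      x ≤ Real.sqrt (2 * Real.log t⁻¹ + 10 * Real.log t⁻¹ ^ ((3:ℝ)/2))) ∧
    (0 < t → t ≤ 2 / Real.exp 1 →
      x ≤ Real.log t⁻¹ + Real.log (1 + 4 * Real.log t⁻¹)) := by
  subst hxt
  rw [log_inv_xi₂ (by linarith), ← xi₂_one]
  constructor
  · intro hle _
    have hx₁ : x ≤ 1 := (strictAntiOn_xi₂.le_iff_ge (mem_Ici.2 zero_le_one) hx).1 hle
    exact le_sqrt_of_sq_le (sq_le_sub_log_one_add_bound hx hx₁)
  · intro _ hle
    have hx₁ : 1 ≤ x := (strictAntiOn_xi₂.le_iff_ge hx (mem_Ici.2 zero_le_one)).1 hle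
    have h4 := le_four_mul_sub_log_one_add hx₁
    linarith [log_le_log (by linarith) (by linarith : 1 + x ≤ 1 + 4 * (x - log (1 + x)))]
end

section
/- Let μ be a non-atomic probability measure on ℝ with finite first moment, and Y a random variable with law μ. Fix t ∈ ℝ with t > E[Y], and let a ∈ (0,∞) satisfy ∫_{t − a⁻¹}^{∞} (x − t) dμ(x) = 0. Define φ_a(x) = max{0, a(x − t) + 1}. Then E[φ_a(Y)] / φ_a(t) = P{Y > t − a⁻¹}, and for every nonnegative convex function φ : ℝ → ℝ that is strictly increasing on [t,∞) with φ(t) ≠ 0, one has E[φ_a(Y)]/φ_a(t) ≤ E[φ(Y)]/φ(t). -/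
open Set MeasureTheory

noncomputable def phia (a t x : ℝ) : ℝ := max 0 (a * (x - t) + 1)

/-!
A convex `φ` lies above its supporting line `φ t + c (x - t)` at `t`. The balance condition
`∫_{[s,∞)} (x - t) dμ = 0`, with `s = t - a⁻¹`, makes the integral over `[s,∞)` of every line
through `(t, φ t)` equal to `φ t · μ[s,∞)`. Hence `E φ(Y) ≥ φ t · μ[s,∞)`, with equality for
`φ_a`, which on `[s,∞)` is itself the line `1 + a (x - t)` and vanishes elsewhere. Since `μ` has
no atoms, `μ[s,∞) = μ(s,∞)`.
-/

theorem ConvexOn.exists_forall_add_mul_sub_le {S : Set ℝ} {f : ℝ → ℝ} {x : ℝ}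
    (hf : ConvexOn ℝ S f) (hx : x ∈ interior S) :
    ∃ c : ℝ, ∀ y ∈ S, f x + c * (y - x) ≤ f y := by
  refine ⟨derivWithin f (Ioi x) x, fun y hy => ?_⟩
  rcases lt_trichotomy y x with hyx | rfl | hxy
  · have hslope := (hf.slope_le_leftDeriv_of_mem_interior hy hx hyx).trans
      (hf.leftDeriv_le_rightDeriv_of_mem_interior hx)
    rw [slope_def_field, div_le_iff₀ (sub_pos.mpr hyx)] at hslope
    linarith
  · simp
  · have hslope := hf.rightDeriv_le_slope_of_mem_interior hx hy hxy
    rw [slope_def_field, le_div_iff₀ (sub_pos.mpr hxy)] at hslope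
    linarith

theorem MeasureTheory.ofReal_integral_le_lintegral_ofReal {α : Type*} [MeasurableSpace α]
    {μ : Measure α} {f : α → ℝ} (hf : Integrable f μ) :
    ENNReal.ofReal (∫ x, f x ∂μ) ≤ ∫⁻ x, ENNReal.ofReal (f x) ∂μ := by
  rw [integral_eq_lintegral_pos_part_sub_lintegral_neg_part hf]
  exact ENNReal.ofReal_le_of_le_toReal (sub_le_self _ ENNReal.toReal_nonneg)

section Balanced

variable {μ : Measure ℝ} [IsFiniteMeasure μ] {S : Set ℝ} {t : ℝ}

theorem integrable_add_mul_sub (hint : Integrable (fun x => x) μ) (k m : ℝ) :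
    Integrable (fun x => k + m * (x - t)) μ :=
  (integrable_const k).add ((hint.sub (integrable_const t)).const_mul m)

theorem setIntegral_add_mul_sub_eq (hint : Integrable (fun x => x) μ)
    (hbal : ∫ x in S, (x - t) ∂μ = 0) (k m : ℝ) :
    ∫ x in S, (k + m * (x - t)) ∂μ = k * μ.real S := by
  have hsub : IntegrableOn (fun x => x - t) S μ := (hint.sub (integrable_const t)).integrableOn
  rw [integral_add (integrable_const k) (hsub.const_mul m), integral_const_mul, hbal,
    setIntegral_const, smul_eq_mul]
  ring

theorem ofReal_mul_measure_le_lintegral_of_convexOn (hint : Integrable (fun x => x) μ)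
    (hbal : ∫ x in S, (x - t) ∂μ = 0) {φ : ℝ → ℝ} (hφ : ConvexOn ℝ univ φ) :
    ENNReal.ofReal (φ t) * μ S ≤ ∫⁻ x, ENNReal.ofReal (φ x) ∂μ := by
  obtain ⟨c, hc⟩ := hφ.exists_forall_add_mul_sub_le (by simp : t ∈ interior univ)
  calc ENNReal.ofReal (φ t) * μ S
      = ENNReal.ofReal (∫ x in S, (φ t + c * (x - t)) ∂μ) := by
        rw [setIntegral_add_mul_sub_eq hint hbal, ENNReal.ofReal_mul' measureReal_nonneg,
          ofReal_measureReal]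
    _ ≤ ∫⁻ x in S, ENNReal.ofReal (φ t + c * (x - t)) ∂μ :=
        ofReal_integral_le_lintegral_ofReal (integrable_add_mul_sub hint _ c).integrableOn
    _ ≤ ∫⁻ x in S, ENNReal.ofReal (φ x) ∂μ :=
        lintegral_mono fun x => ENNReal.ofReal_le_ofReal (hc x (mem_univ x))
    _ ≤ ∫⁻ x, ENNReal.ofReal (φ x) ∂μ := setLIntegral_le_lintegral S _

end Balanced

theorem phia_self (a t : ℝ) : phia a t t = 1 := by
  simp [phia]

theorem phia_eq_indicator {a : ℝ} (ha : 0 < a) (t : ℝ) :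
    phia a t = (Ici (t - a⁻¹)).indicator (fun x => 1 + a * (x - t)) := by
  funext x
  have hline : a * (x - t) + 1 = a * (x - (t - a⁻¹)) := by
    field_simp
    ring
  rw [phia, indicator]
  split_ifs with hx
  · rw [max_eq_right] <;> linarith [mul_nonneg ha.le (sub_nonneg.mpr hx)]
  · rw [max_eq_left]
    linarith [mul_neg_of_pos_of_neg ha (sub_neg.mpr (not_le.mp hx))]

theorem lintegral_ofReal_phia {μ : Measure ℝ} [IsFiniteMeasure μ]
    (hint : Integrable (fun x => x) μ) {a t : ℝ} (ha : 0 < a)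
    (hbal : ∫ x in Ici (t - a⁻¹), (x - t) ∂μ = 0) :
    ∫⁻ x, ENNReal.ofReal (phia a t x) ∂μ = μ (Ici (t - a⁻¹)) := by
  have hint_phia : Integrable (phia a t) μ := by
    rw [phia_eq_indicator ha t]
    exact (integrable_add_mul_sub hint 1 a).indicator measurableSet_Ici
  rw [← ofReal_integral_eq_lintegral_ofReal hint_phia (ae_of_all _ fun x => le_max_left _ _),
    phia_eq_indicator ha t, integral_indicator measurableSet_Ici,
    setIntegral_add_mul_sub_eq hint hbal, one_mul, ofReal_measureReal]

theorem stmt7_general (μ : Measure ℝ) [IsProbabilityMeasure μ] (hna : ∀ x : ℝ, μ {x} = 0)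
    (hint : Integrable (fun x => x) μ) (t : ℝ)
    (a : ℝ) (ha : 0 < a) (haeq : ∫ x in Ici (t - a⁻¹), (x - t) ∂μ = 0) :
    (∫⁻ x, ENNReal.ofReal (phia a t x) ∂μ) / ENNReal.ofReal (phia a t t)
        = μ (Ioi (t - a⁻¹)) ∧
      ∀ φ : ℝ → ℝ, ConvexOn ℝ univ φ → (∀ x, 0 ≤ φ x) → StrictMonoOn φ (Ici t) →
        φ t ≠ 0 →
        (∫⁻ x, ENNReal.ofReal (phia a t x) ∂μ) / ENNReal.ofReal (phia a t t)
          ≤ (∫⁻ x, ENNReal.ofReal (φ x) ∂μ) / ENNReal.ofReal (φ t) := by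
  have hIoi : μ (Ioi (t - a⁻¹)) = μ (Ici (t - a⁻¹)) := measure_congr (Ioi_ae_eq_Ici' (hna _))
  have hratio : (∫⁻ x, ENNReal.ofReal (phia a t x) ∂μ) / ENNReal.ofReal (phia a t t)
      = μ (Ioi (t - a⁻¹)) := by
    rw [phia_self, ENNReal.ofReal_one, div_one, lintegral_ofReal_phia hint ha haeq, hIoi]
  refine ⟨hratio, fun φ hφ hpos _ hne => ?_⟩
  have hφt : ENNReal.ofReal (φ t) ≠ 0 := by
    simpa using lt_of_le_of_ne (hpos t) (Ne.symm hne)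
  rw [hratio, hIoi, ENNReal.le_div_iff_mul_le (Or.inl hφt) (Or.inl ENNReal.ofReal_ne_top),
    mul_comm]
  exact ofReal_mul_measure_le_lintegral_of_convexOn hint haeq hφ

theorem stmt7 (μ : Measure ℝ) [IsProbabilityMeasure μ] (hna : ∀ x : ℝ, μ {x} = 0)
    (hint : Integrable (fun x => x) μ) (t : ℝ) (ht : ∫ x, x ∂μ < t)
    (a : ℝ) (ha : 0 < a) (haeq : ∫ x in Ici (t - a⁻¹), (x - t) ∂μ = 0) :
    (∫⁻ x, ENNReal.ofReal (phia a t x) ∂μ) / ENNReal.ofReal (phia a t t)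
        = μ (Ioi (t - a⁻¹)) ∧
      ∀ φ : ℝ → ℝ, ConvexOn ℝ univ φ → (∀ x, 0 ≤ φ x) → StrictMonoOn φ (Ici t) →
        φ t ≠ 0 →
        (∫⁻ x, ENNReal.ofReal (phia a t x) ∂μ) / ENNReal.ofReal (phia a t t)
          ≤ (∫⁻ x, ENNReal.ofReal (φ x) ∂μ) / ENNReal.ofReal (φ t) :=
  stmt7_general μ hna hint t a ha haeq
end

section
/- Let n ∈ ℕ and let K ⊆ ℝⁿ have the property that there exists a ∈ [−∞,∞]ⁿ such that whenever x ∈ K and y ∈ ℝⁿ has every coordinate yᵢ between aᵢ and xᵢ (non-strictly), then y ∈ K. Then for all x, y ∈ K there exists z ∈ K such that the segments [x,z] and [z,y] are contained in K and |x − z| + |z − y| ≤ √2 |x − y| (Euclidean norm). In particular K is polygonally connected with connectivity parameter 𝔏(K) ≤ √2. -/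
/-!
Project the coordinates of `a` onto the box spanned by `x` and `y`: the resulting point `z` has
each coordinate `zᵢ` between `aᵢ` and both `xᵢ` and `yᵢ`, so the segments `[x, z]` and `[z, y]`
lie in `K`. Since every `zᵢ` lies between `xᵢ` and `yᵢ`, the angle at `z` is not acute,
`⟪x - z, y - z⟫ ≤ 0`, whence `|x - y|² ≥ |x - z|² + |z - y|² ≥ (|x - z| + |z - y|)² / 2`.
-/

open Set

def IsBetween (a : EReal) (x t : ℝ) : Prop :=
  (a ≤ (t : EReal) ∧ (t : EReal) ≤ (x : EReal)) ∨ ((x : EReal) ≤ (t : EReal) ∧ (t : EReal) ≤ a)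

theorem IsBetween.of_mem_uIcc {a : EReal} {x s t : ℝ} (hs : IsBetween a x s)
    (ht : t ∈ uIcc x s) : IsBetween a x t := by
  have hts : t ∈ uIcc s x := uIcc_comm x s ▸ ht
  rcases hs with ⟨has, hsx⟩ | ⟨hxs, hsa⟩
  · have hsx : s ≤ x := by exact_mod_cast hsx
    rw [uIcc_of_le hsx] at hts
    exact Or.inl ⟨has.trans (by exact_mod_cast hts.1), by exact_mod_cast hts.2⟩
  · have hxs : x ≤ s := by exact_mod_cast hxs
    rw [uIcc_of_le hxs] at ht
    exact Or.inr ⟨by exact_mod_cast ht.1, (EReal.coe_le_coe_iff.2 ht.2).trans hsa⟩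

theorem exists_mem_uIcc_isBetween_isBetween (a : EReal) (u v : ℝ) :
    ∃ w ∈ uIcc u v, IsBetween a u w ∧ IsBetween a v w := by
  wlog huv : u ≤ v generalizing u v
  · obtain ⟨w, hw, hwu, hwv⟩ := this v u (le_of_not_ge huv)
    exact ⟨w, uIcc_comm u v ▸ hw, hwv, hwu⟩
  rw [uIcc_of_le huv]
  by_cases hau : a ≤ u
  · exact ⟨u, ⟨le_rfl, huv⟩, Or.inl ⟨hau, le_rfl⟩, Or.inl ⟨hau, by exact_mod_cast huv⟩⟩
  by_cases hva : (v : EReal) ≤ a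
  · exact ⟨v, ⟨huv, le_rfl⟩, Or.inr ⟨by exact_mod_cast huv, hva⟩, Or.inr ⟨le_rfl, hva⟩⟩
  rw [not_le] at hau hva
  have ha : (a.toReal : EReal) = a := EReal.coe_toReal hva.ne_top hau.ne_bot
  rw [← ha] at hau hva ⊢
  have hau : u < a.toReal := by exact_mod_cast hau
  have hva : a.toReal < v := by exact_mod_cast hva
  exact ⟨a.toReal, ⟨hau.le, hva.le⟩, Or.inr ⟨by exact_mod_cast hau.le, le_rfl⟩,
    Or.inl ⟨le_rfl, by exact_mod_cast hva.le⟩⟩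

theorem PiLp.apply_mem_segment {𝕜 : Type*} [Semiring 𝕜] [PartialOrder 𝕜] {p : ENNReal} {ι : Type*}
    {β : ι → Type*} [∀ i, AddCommGroup (β i)] [∀ i, Module 𝕜 (β i)] {x y q : PiLp p β}
    (hq : q ∈ segment 𝕜 x y) (i : ι) : q i ∈ segment 𝕜 (x i) (y i) := by
  obtain ⟨c, d, hc, hd, hcd, rfl⟩ := hq
  exact ⟨c, d, hc, hd, hcd, rfl⟩

theorem dist_add_dist_le_sqrt_two_mul_dist {F : Type*} [NormedAddCommGroup F]
    [InnerProductSpace ℝ F] {x y z : F} (h : inner ℝ (x - z) (y - z) ≤ 0) :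
    dist x z + dist z y ≤ Real.sqrt 2 * dist x y := by
  have hxy : ‖x - y‖ ^ 2 = ‖x - z‖ ^ 2 - 2 * inner ℝ (x - z) (y - z) + ‖y - z‖ ^ 2 := by
    rw [← norm_sub_sq_real, sub_sub_sub_cancel_right]
  rw [dist_eq_norm, dist_eq_norm, dist_eq_norm, ← norm_neg (z - y), neg_sub]
  apply le_of_pow_le_pow_left₀ two_ne_zero (by positivity)
  rw [mul_pow, Real.sq_sqrt zero_le_two]
  nlinarith [sq_nonneg (‖x - z‖ - ‖y - z‖)]

theorem EuclideanSpace.inner_sub_sub_nonpos_of_mem_uIcc {ι : Type*} [Fintype ι]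
    {x y z : EuclideanSpace ℝ ι} (hz : ∀ i, z i ∈ uIcc (x i) (y i)) :
    inner ℝ (x - z) (y - z) ≤ 0 := by
  rw [PiLp.inner_apply]
  refine Finset.sum_nonpos fun i _ => ?_
  simp only [PiLp.sub_apply, Real.inner_apply]
  rcases mem_uIcc.1 (hz i) with h | h <;> nlinarith [h.1, h.2]

theorem segment_subset_of_isBetween {ι : Type*} {K : Set (EuclideanSpace ℝ ι)} {a : ι → EReal}
    (hK : ∀ x ∈ K, ∀ y : EuclideanSpace ℝ ι, (∀ i, IsBetween (a i) (x i) (y i)) → y ∈ K)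
    {x z : EuclideanSpace ℝ ι} (hx : x ∈ K) (hz : ∀ i, IsBetween (a i) (x i) (z i)) :
    segment ℝ x z ⊆ K := fun _ hp =>
  hK x hx _ fun i => (hz i).of_mem_uIcc (segment_subset_uIcc _ _ (PiLp.apply_mem_segment hp i))

theorem stmt9 (n : ℕ) (K : Set (EuclideanSpace ℝ (Fin n))) (a : Fin n → EReal)
    (hK : ∀ x ∈ K, ∀ y : EuclideanSpace ℝ (Fin n),
      (∀ i, (a i ≤ (y i : EReal) ∧ (y i : EReal) ≤ (x i : EReal)) ∨
        ((x i : EReal) ≤ (y i : EReal) ∧ (y i : EReal) ≤ a i)) → y ∈ K) :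
    ∀ x ∈ K, ∀ y ∈ K, ∃ z ∈ K, segment ℝ x z ⊆ K ∧ segment ℝ z y ⊆ K ∧
      dist x z + dist z y ≤ Real.sqrt 2 * dist x y := by
  intro x hx y hy
  choose w hw hwx hwy using fun i => exists_mem_uIcc_isBetween_isBetween (a i) (x i) (y i)
  let z : EuclideanSpace ℝ (Fin n) := WithLp.toLp 2 w
  have hxz : segment ℝ x z ⊆ K := segment_subset_of_isBetween hK hx hwx
  have hyz : segment ℝ y z ⊆ K := segment_subset_of_isBetween hK hy hwy
  exact ⟨z, hxz (right_mem_segment ℝ x z), hxz, segment_symm ℝ z y ▸ hyz,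
    dist_add_dist_le_sqrt_two_mul_dist (EuclideanSpace.inner_sub_sub_nonpos_of_mem_uIcc hw)⟩
end

section
/- Let A ⊆ ℝⁿ be polygonally connected with at least two points and 𝔏(A) < ∞. Then for any function f : A → ℝ, the global Lipschitz constant of f satisfies Lip(f) ≤ 𝔏(A) · sup{ Lip(f, x) : x ∈ A }, where Lip(f, x) is the local Lipschitz constant of f at x. -/
/-!
By compactness (a Lebesgue number of the cover by the balls on which the local bound holds), a
segment inside `A` splits into pieces short enough for the local bound
`|f y - f z| ≤ K' * dist y z`, so the bound holds between the endpoints of the segment. Summing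
over the segments of a polygonal path bounds `|f x - f y|` by `K'` times its length
`≤ L * dist x y + η`; then let `η → 0` and `K' → K`.
-/

open Set

lemma abs_sub_le_mul_sum_dist_of_chain {E : Type*} [PseudoMetricSpace E] {f : E → ℝ} {K : ℝ}
    {u : ℕ → E} {N : ℕ} (hstep : ∀ i < N, |f (u i) - f (u (i + 1))| ≤ K * dist (u i) (u (i + 1))) :
    |f (u 0) - f (u N)| ≤ K * ∑ i ∈ Finset.range N, dist (u i) (u (i + 1)) := by
  rw [← Real.dist_eq, Finset.mul_sum]
  calc dist (f (u 0)) (f (u N)) ≤ ∑ i ∈ Finset.range N, dist (f (u i)) (f (u (i + 1))) :=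
        dist_le_range_sum_dist (f ∘ u) N
    _ ≤ _ := Finset.sum_le_sum fun i hi => hstep i (Finset.mem_range.1 hi)

lemma isCompact_segment {E : Type*} [NormedAddCommGroup E] [NormedSpace ℝ E] (a b : E) :
    IsCompact (segment ℝ a b) := by
  rw [segment_eq_image_lineMap]
  exact isCompact_Icc.image AffineMap.lineMap_continuous

lemma exists_fine_chain_on_segment {E : Type*} [NormedAddCommGroup E] [NormedSpace ℝ E]
    (a b : E) {δ : ℝ} (hδ : 0 < δ) :
    ∃ (N : ℕ) (u : ℕ → E), u 0 = a ∧ u N = b ∧ (∀ i ≤ N, u i ∈ segment ℝ a b) ∧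
      (∀ i < N, dist (u i) (u (i + 1)) < δ) ∧
      ∑ i ∈ Finset.range N, dist (u i) (u (i + 1)) = dist a b := by
  obtain ⟨N, hN⟩ := exists_nat_gt (dist a b / δ)
  have hN0 : (0 : ℝ) < N := (div_nonneg dist_nonneg hδ.le).trans_lt hN
  have hstep : ∀ i : ℕ, dist (AffineMap.lineMap a b ((i : ℝ) / N) : E)
      (AffineMap.lineMap a b (((i + 1 : ℕ) : ℝ) / N)) = dist a b / N := by
    intro i
    rw [dist_lineMap_lineMap, Real.dist_eq, Nat.cast_succ, ← sub_div, abs_div, abs_of_pos hN0]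
    simp [inv_mul_eq_div]
  refine ⟨N, fun i => AffineMap.lineMap a b ((i : ℝ) / N), by simp, by simp [hN0.ne'],
    fun i hi => lineMap_mem_segment ℝ a b
      ⟨by positivity, div_le_one_of_le₀ (by exact_mod_cast hi) hN0.le⟩,
    fun i _ => ?_, ?_⟩
  · rw [hstep, div_lt_iff₀ hN0, mul_comm]
    exact (div_lt_iff₀ hδ).1 hN
  · simp only [hstep, Finset.sum_const, Finset.card_range, nsmul_eq_mul]
    field_simp

lemma abs_sub_le_of_locally_lipschitz_on_segment {E : Type*} [NormedAddCommGroup E]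
    [NormedSpace ℝ E] {A : Set E} {f : E → ℝ} {K : ℝ} {a b : E} (hsub : segment ℝ a b ⊆ A)
    (hloc : ∀ x ∈ segment ℝ a b, ∃ ε > (0:ℝ),
      ∀ y ∈ Metric.ball x ε ∩ A, ∀ z ∈ Metric.ball x ε ∩ A, |f y - f z| ≤ K * dist y z) :
    |f a - f b| ≤ K * dist a b := by
  choose ε hε hlip using fun x : segment ℝ a b => hloc x x.2
  obtain ⟨δ, hδ, hleb⟩ := lebesgue_number_lemma_of_metric (isCompact_segment a b)
    (c := fun x : segment ℝ a b => Metric.ball (x : E) (ε x)) (fun _ => Metric.isOpen_ball)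
    (fun x hx => mem_iUnion.2 ⟨⟨x, hx⟩, Metric.mem_ball_self (hε _)⟩)
  obtain ⟨N, u, rfl, rfl, hmem, hfine, hsum⟩ := exists_fine_chain_on_segment a b hδ
  rw [← hsum]
  refine abs_sub_le_mul_sum_dist_of_chain fun i hi => ?_
  obtain ⟨x, hx⟩ := hleb (u i) (hmem i hi.le)
  exact hlip x _ ⟨hx (Metric.mem_ball_self hδ), hsub (hmem i hi.le)⟩
    _ ⟨hx (by rw [Metric.mem_ball, dist_comm]; exact hfine i hi), hsub (hmem (i + 1) hi)⟩

theorem stmt11_general (n : ℕ) (A : Set (EuclideanSpace ℝ (Fin n)))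
    (f : EuclideanSpace ℝ (Fin n) → ℝ) (L K : ℝ) (hK : 0 ≤ K)
    (hpath : ∀ x ∈ A, ∀ y ∈ A, ∀ η > (0:ℝ),
      ∃ (N : ℕ) (u : ℕ → EuclideanSpace ℝ (Fin n)),
        u 0 = x ∧ u N = y ∧ (∀ i < N, segment ℝ (u i) (u (i+1)) ⊆ A) ∧
        ∑ i ∈ Finset.range N, dist (u i) (u (i+1)) ≤ L * dist x y + η)
    (hloc : ∀ x ∈ A, ∀ K' > K, ∃ ε > (0:ℝ),
      ∀ y ∈ Metric.ball x ε ∩ A, ∀ z ∈ Metric.ball x ε ∩ A,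
        |f y - f z| ≤ K' * dist y z) :
    ∀ x ∈ A, ∀ y ∈ A, |f x - f y| ≤ L * K * dist x y := by
  intro x hx y hy
  have hpoly : ∀ K' > K, ∀ η > (0:ℝ), |f x - f y| ≤ K' * (L * dist x y + η) := by
    intro K' hK' η hη
    obtain ⟨N, u, rfl, rfl, hseg, hlen⟩ := hpath _ hx _ hy η hη
    refine (abs_sub_le_mul_sum_dist_of_chain fun i hi => ?_).trans
      (mul_le_mul_of_nonneg_left hlen (hK.trans hK'.le))
    exact abs_sub_le_of_locally_lipschitz_on_segment (hseg i hi)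
      fun z hz => hloc z (hseg i hi hz) K' hK'
  have hbound : ∀ K' > K, |f x - f y| ≤ K' * (L * dist x y) := fun K' hK' =>
    ge_of_tendsto (tendsto_nhdsWithin_of_tendsto_nhds (Continuous.tendsto' (by fun_prop) 0 _
      (by rw [add_zero]))) (eventually_nhdsWithin_of_forall (s := Ioi 0) (hpoly K' hK'))
  rw [mul_comm L K, mul_assoc]
  exact ge_of_tendsto (tendsto_nhdsWithin_of_tendsto_nhds ((continuous_mul_const _).tendsto K))
    (eventually_nhdsWithin_of_forall (s := Ioi K) hbound)

theorem stmt11 (n : ℕ) (A : Set (EuclideanSpace ℝ (Fin n)))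
    (f : EuclideanSpace ℝ (Fin n) → ℝ) (L K : ℝ) (hL : 1 ≤ L) (hK : 0 ≤ K)
    (hpath : ∀ x ∈ A, ∀ y ∈ A, ∀ η > (0:ℝ),
      ∃ (N : ℕ) (u : ℕ → EuclideanSpace ℝ (Fin n)),
        u 0 = x ∧ u N = y ∧ (∀ i < N, segment ℝ (u i) (u (i+1)) ⊆ A) ∧
        ∑ i ∈ Finset.range N, dist (u i) (u (i+1)) ≤ L * dist x y + η)
    (hloc : ∀ x ∈ A, ∀ K' > K, ∃ ε > (0:ℝ),
      ∀ y ∈ Metric.ball x ε ∩ A, ∀ z ∈ Metric.ball x ε ∩ A,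
        |f y - f z| ≤ K' * dist y z) :
    ∀ x ∈ A, ∀ y ∈ A, |f x - f y| ≤ L * K * dist x y :=
  stmt11_general n A f L K hK hpath hloc
end

section
/- Let 0 < q < ∞ and let Y be a random vector in ℝⁿ with density dμ/dx = (2Γ(1 + 1/q))^{−n} exp(−∑ᵢ |xᵢ|^q), and let W be an independent standard exponential random variable. Then the random vector X = Y / (W + ∑ᵢ |Yᵢ|^q)^{1/q} is uniformly distributed in the unit ball B_qⁿ = { x ∈ ℝⁿ : ∑ᵢ |xᵢ|^q ≤ 1 }. -/
/-!
Write `ρ y = ∑ i, |y i| ^ q`. Since `Y` has density `∝ exp (-ρ y)` and `W ~ Exp(1)` is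
independent of it, the pair `(Y, W + ρ Y)` has density `∝ exp (-t)` on the region
`{(y, t) | ρ y ≤ t}`. For fixed `t > 0`, the `q`-homogeneity of `ρ` makes `y ↦ t ^ (-1/q) • y` map
the slice `{ρ ≤ t}` onto the unit ball `{ρ ≤ 1}`, scaling Lebesgue measure by the constant
`t ^ (-n/q)`. Integrating over `t`, the law of `X` is a constant multiple of Lebesgue measure
restricted to the ball, and the constant is forced by `X` being a probability measure. Only
measurability, nonnegativity and `q`-homogeneity of `ρ` enter, so the same holds for any such
gauge on a finite-dimensional space with Haar measure.
-/

open MeasureTheory ProbabilityTheory Set Pointwise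
open scoped ENNReal

instance isProbabilityMeasure_expMeasure_one : IsProbabilityMeasure (expMeasure 1) :=
  isProbabilityMeasure_expMeasure one_pos

theorem expMeasure_one_eq_withDensity :
    expMeasure 1 =
      volume.withDensity fun t => ENNReal.ofReal (if 0 ≤ t then Real.exp (-t) else 0) := by
  change volume.withDensity (exponentialPDF 1) = _
  congr 1 with t
  simp only [exponentialPDF_eq, one_mul]

theorem eq_cond_of_eq_smul_restrict {α : Type*} [MeasurableSpace α] {m ν : Measure α}
    [IsProbabilityMeasure m] {s : Set α} {D : ℝ≥0∞} (h : m = D • ν.restrict s) : m = ν[|s] := by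
  have hD : D * ν s = 1 := by simpa [h] using measure_univ (μ := m)
  rw [h, ProbabilityTheory.cond, ENNReal.eq_inv_of_mul_eq_one_left hD]

theorem ofReal_exp_neg_mul_expMeasure_preimage_add (s : ℝ) {U : Set ℝ} (hU : MeasurableSet U) :
    ENNReal.ofReal (Real.exp (-s)) * expMeasure 1 ((· + s) ⁻¹' U) =
      ∫⁻ t in U ∩ Ici s, ENNReal.ofReal (Real.exp (-t)) := by
  set f : ℝ → ℝ≥0∞ := fun t => ENNReal.ofReal (if 0 ≤ t then Real.exp (-t) else 0)
  have hshift : expMeasure 1 ((· + s) ⁻¹' U) = ∫⁻ t in U, f (t - s) := by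
    rw [expMeasure_one_eq_withDensity, withDensity_apply _ (measurable_add_const s hU),
      ← lintegral_indicator (measurable_add_const s hU), ← lintegral_indicator hU,
      ← lintegral_add_right_eq_self (U.indicator fun t => f (t - s)) s]
    congr 1 with w
    simp only [indicator, add_sub_cancel_right]
    rfl
  have hdens : ∀ t, ENNReal.ofReal (Real.exp (-s)) * f (t - s) =
      (Ici s).indicator (fun t => ENNReal.ofReal (Real.exp (-t))) t := by
    intro t
    by_cases ht : s ≤ t
    · rw [indicator_of_mem (mem_Ici.2 ht), ← ENNReal.ofReal_mul (Real.exp_pos _).le,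
        if_pos (sub_nonneg.2 ht), ← Real.exp_add]
      ring_nf
    · rw [indicator_of_notMem (by simpa using ht)]
      simp [f, ht]
  rw [hshift, ← lintegral_const_mul' _ _ ENNReal.ofReal_ne_top]
  simp only [hdens]
  rw [setLIntegral_indicator measurableSet_Ici, inter_comm]

theorem map_prod_expMeasure_add_eq {α : Type*} [MeasurableSpace α] (μ : Measure α) [SFinite μ]
    {ρ : α → ℝ} (hρ : Measurable ρ) :
    ((μ.withDensity fun y => ENNReal.ofReal (Real.exp (-ρ y))).prod (expMeasure 1)).map
        (fun p => (p.1, p.2 + ρ p.1)) =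
      ((μ.prod volume).withDensity fun p => ENNReal.ofReal (Real.exp (-p.2))).restrict
        {p | ρ p.1 ≤ p.2} := by
  have hS : Measurable fun p : α × ℝ => (p.1, p.2 + ρ p.1) :=
    measurable_fst.prodMk (measurable_snd.add (hρ.comp measurable_fst))
  have hC : MeasurableSet {p : α × ℝ | ρ p.1 ≤ p.2} :=
    measurableSet_le (hρ.comp measurable_fst) measurable_snd
  have hdens : Measurable fun p : α × ℝ => ENNReal.ofReal (Real.exp (-p.2)) := by fun_prop
  ext s hs
  rw [Measure.map_apply hS hs, Measure.prod_apply (hS hs),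
    lintegral_withDensity_eq_lintegral_mul _ (by fun_prop)
      (measurable_measure_prodMk_left (hS hs)),
    Measure.restrict_apply hs, withDensity_apply _ (hs.inter hC),
    ← lintegral_indicator (hs.inter hC),
    lintegral_prod _ (hdens.indicator (hs.inter hC)).aemeasurable]
  congr 1 with y
  change ENNReal.ofReal (Real.exp (-ρ y)) * expMeasure 1 ((· + ρ y) ⁻¹' (Prod.mk y ⁻¹' s)) = _
  rw [ofReal_exp_neg_mul_expMeasure_preimage_add _ (measurable_prodMk_left hs),
    ← lintegral_indicator ((measurable_prodMk_left hs).inter measurableSet_Ici)]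
  rfl

theorem setOf_inv_rpow_smul_mem_and_le_eq {E : Type*} [AddCommGroup E] [Module ℝ E] {q : ℝ}
    {ρ : E → ℝ} (hq : q ≠ 0) (hρ : ∀ c : ℝ, 0 < c → ∀ y, ρ (c • y) = c ^ q * ρ y) {t : ℝ}
    (ht : 0 < t) (A : Set E) :
    {y | (t ^ q⁻¹)⁻¹ • y ∈ A ∧ ρ y ≤ t} = t ^ q⁻¹ • (A ∩ {y | ρ y ≤ 1}) := by
  have hr : 0 < t ^ q⁻¹ := Real.rpow_pos_of_pos ht _
  have hrq : (t ^ q⁻¹) ^ q = t := by rw [← Real.rpow_mul ht.le, inv_mul_cancel₀ hq, Real.rpow_one]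
  ext y
  rw [mem_smul_set_iff_inv_smul_mem₀ hr.ne', mem_ofPred_eq, mem_inter_iff, mem_ofPred_eq,
    hρ _ (inv_pos.2 hr), Real.inv_rpow hr.le, hrq, inv_mul_le_one₀ ht]

section HomogeneousGauge

variable {E : Type*} [NormedAddCommGroup E] [NormedSpace ℝ E] [MeasurableSpace E] [BorelSpace E]
  [FiniteDimensional ℝ E] (μ : Measure E) [μ.IsAddHaarMeasure] {q : ℝ} {ρ : E → ℝ}

theorem measure_setOf_inv_rpow_smul_mem_and_le (hq : q ≠ 0)
    (hρ : ∀ c : ℝ, 0 < c → ∀ y, ρ (c • y) = c ^ q * ρ y) {t : ℝ} (ht : 0 < t) (A : Set E) :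
    μ {y | (t ^ q⁻¹)⁻¹ • y ∈ A ∧ ρ y ≤ t} =
      ENNReal.ofReal (t ^ (Module.finrank ℝ E / q)) * μ (A ∩ {y | ρ y ≤ 1}) := by
  rw [setOf_inv_rpow_smul_mem_and_le_eq hq hρ ht, Measure.addHaar_smul,
    abs_of_nonneg (by positivity), ← Real.rpow_natCast, ← Real.rpow_mul ht.le, inv_mul_eq_div]

theorem map_inv_rpow_smul_eq_smul_restrict (hq : q ≠ 0)
    (hρm : Measurable ρ) (hρ0 : ∀ y, 0 ≤ ρ y) (hρ : ∀ c : ℝ, 0 < c → ∀ y, ρ (c • y) = c ^ q * ρ y) :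
    (((μ.prod volume).withDensity fun p : E × ℝ => ENNReal.ofReal (Real.exp (-p.2))).restrict
        {p | ρ p.1 ≤ p.2}).map (fun p => (p.2 ^ q⁻¹)⁻¹ • p.1) =
      (∫⁻ t in Ioi 0, ENNReal.ofReal (Real.exp (-t) * t ^ (Module.finrank ℝ E / q))) •
        μ.restrict {y | ρ y ≤ 1} := by
  have hΦ : Measurable fun p : E × ℝ => (p.2 ^ q⁻¹)⁻¹ • p.1 := by fun_prop
  have hC : MeasurableSet {p : E × ℝ | ρ p.1 ≤ p.2} :=
    measurableSet_le (hρm.comp measurable_fst) measurable_snd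
  have hdens : Measurable fun p : E × ℝ => ENNReal.ofReal (Real.exp (-p.2)) := by fun_prop
  ext A hA
  have hAC : MeasurableSet ((fun p : E × ℝ => (p.2 ^ q⁻¹)⁻¹ • p.1) ⁻¹' A ∩ {p | ρ p.1 ≤ p.2}) :=
    hΦ hA |>.inter hC
  have hslice : ∀ t : ℝ, MeasurableSet {y | (t ^ q⁻¹)⁻¹ • y ∈ A ∧ ρ y ≤ t} := fun t =>
    (measurable_const_smul _ hA).inter (measurableSet_le hρm measurable_const)
  have hsupp : ∀ t < 0, {y | (t ^ q⁻¹)⁻¹ • y ∈ A ∧ ρ y ≤ t} = ∅ := fun t ht =>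
    eq_empty_of_forall_notMem fun y hy => (hρ0 y).not_gt (hy.2.trans_lt ht)
  calc _ = ∫⁻ t, ENNReal.ofReal (Real.exp (-t)) * μ {y | (t ^ q⁻¹)⁻¹ • y ∈ A ∧ ρ y ≤ t} := by
        rw [Measure.map_apply hΦ hA, Measure.restrict_apply (hΦ hA), withDensity_apply _ hAC,
          ← lintegral_indicator hAC, lintegral_prod_symm _ (hdens.indicator hAC).aemeasurable]
        congr 1 with t
        rw [← lintegral_indicator_const (hslice t)]
        rfl
    _ = ∫⁻ t in Ioi 0, ENNReal.ofReal (Real.exp (-t) * t ^ (Module.finrank ℝ E / q)) *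
          μ (A ∩ {y | ρ y ≤ 1}) := by
        -- the slice at `t = 0` need not be empty, but `{0}` is a null set
        rw [← setLIntegral_eq_of_support_subset (s := Ici 0), setLIntegral_congr Ioi_ae_eq_Ici.symm]
        · refine setLIntegral_congr_fun measurableSet_Ioi fun t ht => ?_
          rw [measure_setOf_inv_rpow_smul_mem_and_le μ hq hρ ht,
            ENNReal.ofReal_mul (Real.exp_pos _).le, mul_assoc]
        · intro t ht
          by_contra ht0
          simp [hsupp t (not_le.1 ht0)] at ht
    _ = _ := by
        rw [lintegral_mul_const _ (by fun_prop), Measure.smul_apply, smul_eq_mul,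
          Measure.restrict_apply hA]

theorem map_inv_rpow_add_smul_eq_cond {Ω : Type*} [MeasurableSpace Ω] (P : Measure Ω)
    [IsProbabilityMeasure P] (hq : q ≠ 0) (hρm : Measurable ρ)
    (hρ0 : ∀ y, 0 ≤ ρ y) (hρ : ∀ c : ℝ, 0 < c → ∀ y, ρ (c • y) = c ^ q * ρ y)
    {Y : Ω → E} {W : Ω → ℝ} (hY : Measurable Y) (hW : Measurable W) (hindep : IndepFun Y W P)
    {c : ℝ} (hYlaw : P.map Y = μ.withDensity fun y => ENNReal.ofReal (c * Real.exp (-ρ y)))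
    (hWlaw : P.map W = expMeasure 1) :
    P.map (fun ω => ((W ω + ρ (Y ω)) ^ q⁻¹)⁻¹ • Y ω) = μ[|{y | ρ y ≤ 1}] := by
  have hS : Measurable fun p : E × ℝ => (p.1, p.2 + ρ p.1) :=
    measurable_fst.prodMk (measurable_snd.add (hρm.comp measurable_fst))
  have hΦ : Measurable fun p : E × ℝ => (p.2 ^ q⁻¹)⁻¹ • p.1 := by fun_prop
  have hYlaw' :
      P.map Y = ENNReal.ofReal c • μ.withDensity fun y => ENNReal.ofReal (Real.exp (-ρ y)) := by
    rw [hYlaw, ← withDensity_smul _ (by fun_prop)]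
    congr 1 with y
    exact ENNReal.ofReal_mul' (Real.exp_pos _).le
  have : IsProbabilityMeasure (P.map fun ω => ((W ω + ρ (Y ω)) ^ q⁻¹)⁻¹ • Y ω) :=
    Measure.isProbabilityMeasure_map (hΦ.comp (hS.comp (hY.prodMk hW))).aemeasurable
  apply eq_cond_of_eq_smul_restrict
  calc P.map (fun ω => ((W ω + ρ (Y ω)) ^ q⁻¹)⁻¹ • Y ω)
      = (((P.map Y).prod (P.map W)).map fun p => (p.1, p.2 + ρ p.1)).map
          fun p => (p.2 ^ q⁻¹)⁻¹ • p.1 := by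
        rw [← (indepFun_iff_map_prod_eq_prod_map_map hY.aemeasurable hW.aemeasurable).1 hindep,
          Measure.map_map hS (hY.prodMk hW), Measure.map_map hΦ (hS.comp (hY.prodMk hW))]
        rfl
    _ = _ := by
        rw [hYlaw', hWlaw, Measure.prod_smul_left, Measure.map_smul, Measure.map_smul,
          map_prod_expMeasure_add_eq μ hρm, map_inv_rpow_smul_eq_smul_restrict μ hq hρm hρ0 hρ,
          smul_smul]

end HomogeneousGauge

theorem sum_abs_rpow_smul {ι : Type*} [Fintype ι] (q : ℝ) {c : ℝ} (hc : 0 ≤ c) (x : ι → ℝ) :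
    ∑ i, |(c • x) i| ^ q = c ^ q * ∑ i, |x i| ^ q := by
  simp only [Finset.mul_sum, Pi.smul_apply, smul_eq_mul, abs_mul, abs_of_nonneg hc,
    Real.mul_rpow hc (abs_nonneg _)]

theorem stmt12 {Ω : Type*} [MeasurableSpace Ω] (P : Measure Ω) [IsProbabilityMeasure P]
    (n : ℕ) (q : ℝ) (hq : 0 < q)
    (Y : Ω → (Fin n → ℝ)) (W : Ω → ℝ) (hY : Measurable Y) (hW : Measurable W)
    (hindep : IndepFun Y W P)
    (hYlaw : Measure.map Y P = volume.withDensity (fun x =>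
      ENNReal.ofReal ((2 * Real.Gamma (1 + 1/q)) ^ (-(n:ℝ)) *
        Real.exp (-∑ i, |x i| ^ q))))
    (hWlaw : Measure.map W P = volume.withDensity (fun t =>
      ENNReal.ofReal (if 0 ≤ t then Real.exp (-t) else 0)))
    (X : Ω → (Fin n → ℝ))
    (hX : ∀ ω, X ω = fun i => Y ω i / (W ω + ∑ j, |Y ω j| ^ q) ^ (1/q)) :
    Measure.map X P =
      (volume {x : Fin n → ℝ | ∑ i, |x i| ^ q ≤ 1})⁻¹ •
        volume.restrict {x : Fin n → ℝ | ∑ i, |x i| ^ q ≤ 1} := by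
  have hX' : X = fun ω => ((W ω + ∑ j, |Y ω j| ^ q) ^ q⁻¹)⁻¹ • Y ω := by
    funext ω i
    simp only [hX ω, one_div, Pi.smul_apply, smul_eq_mul]
    exact div_eq_inv_mul _ _
  rw [hX']
  exact map_inv_rpow_add_smul_eq_cond (ρ := fun x : Fin n → ℝ => ∑ i, |x i| ^ q) volume P
    hq.ne' (by fun_prop) (fun x => by positivity) (fun c hc => sum_abs_rpow_smul q hc.le)
    hY hW hindep hYlaw (hWlaw.trans expMeasure_one_eq_withDensity.symm)
end

section
/- Let 0 < q < ∞, let Y have density (2Γ(1+1/q))^{−n} exp(−|x|_q^q) on ℝⁿ, and W an independent standard exponential variable; set X = Y/(W + |Y|_q^q)^{1/q}. Then for every t ∈ [0,1), P{ |X|_q ≤ t } = tⁿ. -/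
open MeasureTheory ProbabilityTheory Set Filter Topology
open scoped ENNReal

/-!
Since `∑ |Xᵢ|^q = S / (W + S)` with `S = ∑ |Yᵢ|^q`, for `0 < t < 1` the event `|X|_q ≤ t` is
`{W ≥ (t^{-q} - 1) S}`. Integrating the exponential tail of `W` against the law of `Y` turns its
probability into `c ∫ exp (-∑ |xᵢ / t|^q) dx = tⁿ c ∫ exp (-∑ |xᵢ|^q) dx = tⁿ`, where `c` is the
normalising constant of the density of `Y`, which therefore never has to be evaluated.
The case `t = 0` follows by letting `t ↓ 0`.
-/

lemma rpow_one_div_div_add_le_iff {q s w t : ℝ} (hq : 0 < q) (hs : 0 ≤ s) (hw : 0 ≤ w)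
    (ht : 0 < t) : (s / (w + s)) ^ (1 / q) ≤ t ↔ (t ^ (-q) - 1) * s ≤ w := by
  have hsw : 0 ≤ s / (w + s) := by positivity
  have htq : 0 < t ^ q := Real.rpow_pos_of_pos ht q
  rw [← Real.rpow_le_rpow_iff (Real.rpow_nonneg hsw _) ht.le hq, ← Real.rpow_mul hsw,
    one_div_mul_cancel hq.ne', Real.rpow_one, Real.rpow_neg ht.le]
  rcases (add_nonneg hw hs).eq_or_lt with h | h
  · obtain ⟨rfl, rfl⟩ : w = 0 ∧ s = 0 := ⟨by linarith, by linarith⟩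
    simp [htq.le]
  · have hlhs : ((t ^ q)⁻¹ - 1) * s = (s - t ^ q * s) / t ^ q := by field_simp
    rw [div_le_iff₀ h, hlhs, div_le_iff₀ htq]
    constructor <;> intro <;> linarith

lemma lintegral_comp_smul_addHaar {E : Type*} [NormedAddCommGroup E] [NormedSpace ℝ E]
    [MeasurableSpace E] [BorelSpace E] [FiniteDimensional ℝ E] (μ : Measure E)
    [μ.IsAddHaarMeasure] {f : E → ℝ≥0∞} (hf : Measurable f) {r : ℝ} (hr : r ≠ 0) :
    ∫⁻ x, f (r • x) ∂μ = ENNReal.ofReal |(r ^ Module.finrank ℝ E)⁻¹| * ∫⁻ x, f x ∂μ := by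
  rw [← lintegral_map hf (measurable_const_smul r), Measure.map_addHaar_smul μ hr,
    lintegral_smul_measure, smul_eq_mul]

section SumAbsRpow

variable {ι : Type*} [Fintype ι]

lemma sum_abs_smul_rpow {r : ℝ} (hr : 0 ≤ r) (q : ℝ) (x : ι → ℝ) :
    ∑ i, |(r • x) i| ^ q = r ^ q * ∑ i, |x i| ^ q := by
  simp_rw [Finset.mul_sum, Pi.smul_apply, smul_eq_mul, abs_mul, abs_of_nonneg hr,
    Real.mul_rpow hr (abs_nonneg _)]

lemma sum_abs_div_rpow_one_div_rpow {q r : ℝ} (hq : q ≠ 0) (hr : 0 ≤ r) (x : ι → ℝ) :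
    ∑ i, |x i / r ^ (1 / q)| ^ q = (∑ i, |x i| ^ q) / r := by
  have hr' : 0 ≤ r ^ (1 / q) := Real.rpow_nonneg hr _
  simp_rw [Finset.sum_div, abs_div, abs_of_nonneg hr', Real.div_rpow (abs_nonneg _) hr', one_div,
    Real.rpow_inv_rpow hr hq]

lemma measurable_sum_abs_rpow (q : ℝ) : Measurable fun x : ι → ℝ => ∑ i, |x i| ^ q := by
  fun_prop

lemma lintegral_exp_neg_mul_sum_abs_rpow {K q t : ℝ} (ht : 0 < t)
    (hν : IsProbabilityMeasure (volume.withDensity fun x : ι → ℝ =>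
      ENNReal.ofReal (K * Real.exp (-∑ i, |x i| ^ q)))) :
    ∫⁻ x, ENNReal.ofReal (Real.exp (-((t ^ (-q) - 1) * ∑ i, |x i| ^ q)))
        ∂(volume.withDensity fun x : ι → ℝ => ENNReal.ofReal (K * Real.exp (-∑ i, |x i| ^ q))) =
      ENNReal.ofReal (t ^ Fintype.card ι) := by
  set ρ : (ι → ℝ) → ℝ≥0∞ := fun x => ENNReal.ofReal (K * Real.exp (-∑ i, |x i| ^ q))
  have hρ : Measurable ρ := by fun_prop
  have hexp : Measurable fun x : ι → ℝ =>
      ENNReal.ofReal (Real.exp (-((t ^ (-q) - 1) * ∑ i, |x i| ^ q))) := by fun_prop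
  calc ∫⁻ x, ENNReal.ofReal (Real.exp (-((t ^ (-q) - 1) * ∑ i, |x i| ^ q))) ∂volume.withDensity ρ
      = ∫⁻ x, ρ (t⁻¹ • x) := by
        rw [lintegral_withDensity_eq_lintegral_mul _ hρ hexp]
        refine lintegral_congr fun x => ?_
        dsimp only [ρ, Pi.mul_apply]
        rw [← ENNReal.ofReal_mul' (Real.exp_pos _).le, mul_assoc, ← Real.exp_add,
          sum_abs_smul_rpow (inv_nonneg.2 ht.le), Real.inv_rpow ht.le, ← Real.rpow_neg ht.le]
        ring_nf
    _ = ENNReal.ofReal (t ^ Fintype.card ι) * volume.withDensity ρ univ := by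
        rw [lintegral_comp_smul_addHaar volume hρ (inv_ne_zero ht.ne'), withDensity_apply _ .univ,
          Measure.restrict_univ, Module.finrank_fintype_fun_eq_card, inv_pow, inv_inv,
          abs_of_pos (by positivity)]
    _ = ENNReal.ofReal (t ^ Fintype.card ι) := by rw [measure_univ, mul_one]

end SumAbsRpow

lemma withDensity_exp_neg_Ici {a : ℝ} (ha : 0 ≤ a) :
    volume.withDensity (fun t => ENNReal.ofReal (if 0 ≤ t then Real.exp (-t) else 0)) (Ici a) =
      ENNReal.ofReal (Real.exp (-a)) := by
  rw [withDensity_apply _ measurableSet_Ici, setLIntegral_congr_fun measurableSet_Ici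
    fun t (ht : a ≤ t) => by rw [if_pos (ha.trans ht)], ← ofReal_integral_eq_lintegral_ofReal,
    integral_Ici_eq_integral_Ioi, integral_exp_neg_Ioi]
  · exact Iff.mpr integrableOn_Ici_iff_integrableOn_Ioi (integrableOn_exp_neg_Ioi a)
  · exact ae_of_all _ fun t => (Real.exp_pos _).le

lemma ae_nonneg_withDensity_exp_neg :
    ∀ᵐ t ∂volume.withDensity (fun t => ENNReal.ofReal (if 0 ≤ t then Real.exp (-t) else 0)),
      0 ≤ t := by
  rw [ae_withDensity_iff
    (Measurable.ite measurableSet_Ici (by fun_prop) measurable_const).ennreal_ofReal]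
  exact ae_of_all _ fun t ht => by_contra fun h => ht (by simp [h])

lemma measure_le_eq_lintegral_map_Ici {Ω E : Type*} [MeasurableSpace Ω] [MeasurableSpace E]
    {P : Measure Ω} [IsFiniteMeasure P] {Y : Ω → E} {W : Ω → ℝ} (hY : Measurable Y)
    (hW : Measurable W) (hind : IndepFun Y W P) {f : E → ℝ} (hf : Measurable f) :
    P {ω | f (Y ω) ≤ W ω} = ∫⁻ y, P.map W (Ici (f y)) ∂(P.map Y) := by
  have hS : MeasurableSet {p : E × ℝ | f p.1 ≤ p.2} :=
    measurableSet_le (hf.comp measurable_fst) measurable_snd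
  rw [show {ω | f (Y ω) ≤ W ω} = (fun ω => (Y ω, W ω)) ⁻¹' {p | f p.1 ≤ p.2} from rfl,
    ← Measure.map_apply (hY.prodMk hW) hS,
    (indepFun_iff_map_prod_eq_prod_map_map hY.aemeasurable hW.aemeasurable).1 hind,
    Measure.prod_apply hS]
  rfl

lemma measure_setOf_le_zero_eq_zero {Ω : Type*} [MeasurableSpace Ω] {μ : Measure Ω} {F : Ω → ℝ}
    {n : ℕ} (hn : n ≠ 0) (h : ∀ t ∈ Ioo (0 : ℝ) 1, μ {ω | F ω ≤ t} = ENNReal.ofReal (t ^ n)) :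
    μ {ω | F ω ≤ 0} = 0 := by
  have hlim : Tendsto (fun t : ℝ => ENNReal.ofReal (t ^ n)) (𝓝[>] 0) (𝓝 0) := by
    have hcont : Continuous fun t : ℝ => ENNReal.ofReal (t ^ n) :=
      ENNReal.continuous_ofReal.comp (continuous_pow n)
    simpa [hn] using (hcont.tendsto 0).mono_left nhdsWithin_le_nhds
  refine nonpos_iff_eq_zero.1 (ge_of_tendsto hlim ?_)
  filter_upwards [Ioo_mem_nhdsGT zero_lt_one] with t ht
  exact h t ht ▸ measure_mono fun ω hω => le_trans hω ht.1.le

theorem stmt13 {Ω : Type*} [MeasurableSpace Ω] (P : Measure Ω) [IsProbabilityMeasure P]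
    (n : ℕ) (q : ℝ) (hq : 0 < q)
    (Y : Ω → (Fin n → ℝ)) (W : Ω → ℝ) (hY : Measurable Y) (hW : Measurable W)
    (hindep : IndepFun Y W P)
    (hYlaw : Measure.map Y P = volume.withDensity (fun x =>
      ENNReal.ofReal ((2 * Real.Gamma (1 + 1/q)) ^ (-(n:ℝ)) *
        Real.exp (-∑ i, |x i| ^ q))))
    (hWlaw : Measure.map W P = volume.withDensity (fun t =>
      ENNReal.ofReal (if 0 ≤ t then Real.exp (-t) else 0)))
    (X : Ω → (Fin n → ℝ))
    (hX : ∀ ω, X ω = fun i => Y ω i / (W ω + ∑ j, |Y ω j| ^ q) ^ (1/q)) :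
    ∀ t : ℝ, 0 ≤ t → t < 1 →
      P {ω | (∑ i, |X ω i| ^ q) ^ (1/q) ≤ t} = ENNReal.ofReal (t ^ n) := by
  have hW0 : ∀ᵐ ω ∂P, 0 ≤ W ω :=
    ae_of_ae_map hW.aemeasurable (hWlaw ▸ ae_nonneg_withDensity_exp_neg)
  have hpos : ∀ t ∈ Ioo (0 : ℝ) 1,
      P {ω | (∑ i, |X ω i| ^ q) ^ (1/q) ≤ t} = ENNReal.ofReal (t ^ n) := by
    rintro t ⟨ht0, ht1⟩
    have hc : 0 ≤ t ^ (-q) - 1 :=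
      sub_nonneg.2 (Real.one_le_rpow_of_pos_of_le_one_of_nonpos ht0 ht1.le (neg_nonpos.2 hq.le))
    calc P {ω | (∑ i, |X ω i| ^ q) ^ (1/q) ≤ t}
        = P {ω | (t ^ (-q) - 1) * ∑ i, |Y ω i| ^ q ≤ W ω} := by
          refine measure_congr (eventuallyEq_set.2 (hW0.mono fun ω hω => ?_))
          have hS : 0 ≤ ∑ i, |Y ω i| ^ q := by positivity
          simp only [mem_ofPred_eq, hX, sum_abs_div_rpow_one_div_rpow hq.ne' (add_nonneg hω hS)]
          exact rpow_one_div_div_add_le_iff hq hS hω ht0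
      _ = ∫⁻ y, P.map W (Ici ((t ^ (-q) - 1) * ∑ i, |y i| ^ q)) ∂(P.map Y) :=
          measure_le_eq_lintegral_map_Ici hY hW hindep ((measurable_sum_abs_rpow q).const_mul _)
      _ = ∫⁻ y, ENNReal.ofReal (Real.exp (-((t ^ (-q) - 1) * ∑ i, |y i| ^ q))) ∂(P.map Y) :=
          lintegral_congr fun y => by
            rw [hWlaw, withDensity_exp_neg_Ici (mul_nonneg hc (by positivity))]
      _ = ENNReal.ofReal (t ^ n) := by
          rw [hYlaw, lintegral_exp_neg_mul_sum_abs_rpow ht0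
            (hYlaw ▸ Measure.isProbabilityMeasure_map hY.aemeasurable), Fintype.card_fin]
  intro t ht ht1
  obtain rfl | ht0 := ht.eq_or_lt
  · obtain rfl | hn := n.eq_zero_or_pos
    · simp [Real.zero_rpow (inv_ne_zero hq.ne')]
    · rw [zero_pow hn.ne', ENNReal.ofReal_zero]
      exact measure_setOf_le_zero_eq_zero hn.ne' hpos
  · exact hpos t ⟨ht0, ht1⟩
end

section
/- Let (γᵢ)₁ⁿ be i.i.d. uniform random variables on (0,1) with order statistics γ₍₁₎ ≤ ⋯ ≤ γ₍ₙ₎. Then for each k and each s > 0 with (k + s√k)/(n+1) < 1, P{ γ₍ₖ₎ ≥ (k + s√k)/(n+1) } ≤ (ξ₂(s/√k))^k, where ξ₂(t) = e^{−t}(1 + t). -/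
/-! With `K = k + 1` (`Tuple.sort` is 0-indexed), `t = s / √K` and `u = K (1 + t) / (n + 1)`,
the order statistic of rank `K` is at least `u` iff at least `n - k` of the `γᵢ` lie in `[u, 1)`,
a count of `n` independent successes of probability `1 - u`. The Chernoff bound at
`λ = log (1 + t)` gives `(1 + t) ^ k * (1 - b) ^ n` with `b = K t / (n + 1)`, and
`(1 - b) ^ n ≤ e^{-b n} = e^{-t K} e^b ≤ e^{-t K} (1 + t)`
because `b ≤ t / (1 + t) ≤ log (1 + t)`. -/

open MeasureTheory ProbabilityTheory Set
open scoped Finset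

theorem Tuple.le_apply_sort_iff_sub_le_card {α : Type*} [LinearOrder α] {n : ℕ}
    (f : Fin n → α) (a : α) (k : Fin n) :
    a ≤ f (Tuple.sort f k) ↔ n - k ≤ #{i | a ≤ f i} := by
  have hsort : #{i | f (Tuple.sort f i) < a} = #{i | f i < a} :=
    Finset.card_equiv (Tuple.sort f) (by simp)
  have hsplit : #{i | f i < a} + #{i | a ≤ f i} = n := by
    simpa [not_lt] using Finset.card_filter_add_card_filter_not (s := Finset.univ) (f · < a)
  have hmono := Tuple.lt_card_lt_iff_apply_lt_of_monotone (j := k) (a := a) (Tuple.monotone_sort f)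
  simp only [Function.comp_apply, hsort] at hmono
  rw [← not_lt, ← hmono]
  omega

section Chernoff

variable {Ω : Type*} [MeasurableSpace Ω] {μ : Measure Ω} [IsProbabilityMeasure μ]

theorem mgf_indicator_one {S : Set Ω} (hS : MeasurableSet S) (t : ℝ) :
    mgf (S.indicator 1) μ t = 1 + (Real.exp t - 1) * μ.real S := by
  have hexp : (fun ω => Real.exp (t * S.indicator 1 ω))
      = fun ω => 1 + S.indicator (fun _ => Real.exp t - 1) ω := by
    funext ω
    by_cases hω : ω ∈ S <;> simp [hω]
  rw [mgf, hexp, integral_add (integrable_const 1) ((integrable_const _).indicator hS),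
    integral_indicator_const _ hS]
  simp [mul_comm]

theorem measureReal_card_mem_ge_le_exp_mul {ι E : Type*} [Fintype ι] [MeasurableSpace E]
    {X : ι → Ω → E} (hX : ∀ i, Measurable (X i)) (hindep : iIndepFun X μ)
    {A : Set E} [DecidablePred (· ∈ A)] (hA : MeasurableSet A)
    {p : ℝ} (hp : ∀ i, μ.real (X i ⁻¹' A) = p)
    {t : ℝ} (ht : 0 ≤ t) (m : ℝ) :
    μ.real {ω | m ≤ #{i | X i ω ∈ A}}
      ≤ Real.exp (-t * m) * (1 + (Real.exp t - 1) * p) ^ Fintype.card ι := by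
  set Y : ι → Ω → ℝ := fun i => (X i ⁻¹' A).indicator 1
  have hYmeas : ∀ i, Measurable (Y i) := fun i => measurable_one.indicator (hX i hA)
  have hYindep : iIndepFun Y μ :=
    hindep.comp (fun _ => A.indicator (1 : E → ℝ)) (fun _ => measurable_one.indicator hA)
  have hcount : ∀ ω, (#{i | X i ω ∈ A} : ℝ) = (∑ i, Y i) ω := by
    intro ω
    classical
    simp [Y, Set.indicator_apply]
  have hcount_le : ∀ ω, (∑ i, Y i) ω ≤ Fintype.card ι := by
    intro ω
    rw [← hcount]
    exact_mod_cast Finset.card_le_univ _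
  have hint : Integrable (fun ω => Real.exp (t * (∑ i, Y i) ω)) μ :=
    integrable_exp_mul_of_le t _ ht (by fun_prop) (ae_of_all _ hcount_le)
  simp_rw [hcount]
  refine (measure_ge_le_exp_mul_mgf m ht hint).trans_eq ?_
  rw [hYindep.mgf_sum hYmeas, Finset.prod_congr rfl fun i _ => mgf_indicator_one (hX i hA) t]
  simp [hp]

end Chernoff

theorem measureReal_preimage_Ici_of_map_eq_uniform {Ω : Type*} [MeasurableSpace Ω]
    {μ : Measure Ω} {X : Ω → ℝ} (hX : Measurable X)
    (hunif : μ.map X = volume.restrict (Ioo 0 1)) {u : ℝ} (hu0 : 0 < u) (hu1 : u ≤ 1) :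
    μ.real (X ⁻¹' Ici u) = 1 - u := by
  have hIco : Ici u ∩ Ioo 0 1 = Ico u 1 := by
    ext x
    constructor
    · rintro ⟨hux, -, hx1⟩
      exact ⟨hux, hx1⟩
    · rintro ⟨hux, hx1⟩
      exact ⟨hux, hu0.trans_le hux, hx1⟩
  rw [measureReal_def, ← Measure.map_apply hX measurableSet_Ici, hunif,
    Measure.restrict_apply measurableSet_Ici, hIco, Real.volume_Ico,
    ENNReal.toReal_ofReal (by linarith)]

theorem Real.exp_le_one_add_of_mul_one_add_le {b t : ℝ} (ht : 0 < 1 + t)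
    (hb : b * (1 + t) ≤ t) : Real.exp b ≤ 1 + t := by
  have hb_le_log : b ≤ Real.log (1 + t) := calc
    b ≤ t / (1 + t) := by rwa [le_div_iff₀ ht]
    _ = 1 - (1 + t)⁻¹ := by field_simp; ring
    _ ≤ Real.log (1 + t) := Real.one_sub_inv_le_log_of_pos ht
  simpa [Real.exp_log ht] using Real.exp_le_exp.2 hb_le_log

theorem one_add_mul_one_sub_pow_le {n m K : ℕ} (hmK : m + K = n + 1) {t : ℝ} (ht : 0 < t)
    (hK : K * (1 + t) ≤ n + 1) :
    (1 + t * (1 - K * (1 + t) / (n + 1))) ^ n ≤ (1 + t) ^ m * (Real.exp (-t) * (1 + t)) ^ K := by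
  have hn : (0 : ℝ) < n + 1 := by positivity
  set b : ℝ := K * t / (n + 1) with hb
  have hfactor : 1 + t * (1 - K * (1 + t) / (n + 1)) = (1 + t) * (1 - b) := by
    rw [hb]
    field_simp
    ring
  have hbn : b * (n + 1) = t * K := by
    rw [hb]
    field_simp
  have hb1 : b * (1 + t) ≤ t := by
    rw [hb, div_mul_eq_mul_div, div_le_iff₀ hn]
    nlinarith
  have hb_le_one : b ≤ 1 := by nlinarith
  have hpow : (1 - b) ^ n ≤ Real.exp (-(t * K)) * (1 + t) := calc
    (1 - b) ^ n ≤ Real.exp (-b) ^ n :=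
      pow_le_pow_left₀ (by linarith) (Real.one_sub_le_exp_neg b) n
    _ = Real.exp (-(t * K)) * Real.exp b := by
      rw [← Real.exp_nat_mul, ← Real.exp_add]
      congr 1
      linarith
    _ ≤ Real.exp (-(t * K)) * (1 + t) := by
      gcongr
      exact Real.exp_le_one_add_of_mul_one_add_le (by linarith) hb1
  calc (1 + t * (1 - K * (1 + t) / (n + 1))) ^ n = (1 + t) ^ n * (1 - b) ^ n := by
        rw [hfactor, mul_pow]
    _ ≤ (1 + t) ^ n * (Real.exp (-(t * K)) * (1 + t)) := by gcongr
    _ = Real.exp (-(t * K)) * (1 + t) ^ (m + K) := by rw [hmK]; ring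
    _ = (1 + t) ^ m * (Real.exp (-t) * (1 + t)) ^ K := by
      rw [pow_add, mul_pow, ← Real.exp_nat_mul]
      ring_nf

theorem exp_neg_log_one_add_mul_mul_pow_le {n m K : ℕ} (hmK : m + K = n + 1) {t : ℝ}
    (ht : 0 < t) (hK : K * (1 + t) ≤ n + 1) :
    Real.exp (-Real.log (1 + t) * m) * (1 + t * (1 - K * (1 + t) / (n + 1))) ^ n
      ≤ (Real.exp (-t) * (1 + t)) ^ K := by
  have hscale : Real.exp (-Real.log (1 + t) * m) * (1 + t) ^ m = 1 := by
    rw [neg_mul, Real.exp_neg, mul_comm (Real.log _), Real.exp_nat_mul, Real.exp_log (by linarith),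
      inv_mul_cancel₀ (by positivity)]
  calc _ ≤ Real.exp (-Real.log (1 + t) * m) * ((1 + t) ^ m * (Real.exp (-t) * (1 + t)) ^ K) := by
        gcongr
        exact one_add_mul_one_sub_pow_le hmK ht hK
    _ = _ := by rw [← mul_assoc, hscale, one_mul]

theorem stmt19 {Ω : Type*} [MeasurableSpace Ω] (P : Measure Ω) [IsProbabilityMeasure P]
    (n : ℕ) (γ : Fin n → Ω → ℝ) (hmeas : ∀ i, Measurable (γ i))
    (hindep : iIndepFun γ P)
    (hunif : ∀ i, Measure.map (γ i) P = volume.restrict (Ioo (0:ℝ) 1))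
    (k : Fin n) (s : ℝ) (hs : 0 < s)
    (hlt : ((k.1 + 1 : ℝ) + s * Real.sqrt (k.1 + 1)) / (n + 1) < 1) :
    P {ω | ((k.1 + 1 : ℝ) + s * Real.sqrt (k.1 + 1)) / (n + 1) ≤
        (fun i => γ i ω) (Tuple.sort (fun i => γ i ω) k)}
      ≤ ENNReal.ofReal
          ((Real.exp (-(s / Real.sqrt (k.1 + 1))) * (1 + s / Real.sqrt (k.1 + 1))) ^ (k.1 + 1)) := by
  set r := Real.sqrt (k.1 + 1)
  have hr : 0 < r := Real.sqrt_pos.2 (by positivity)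
  set t := s / r
  have ht : 0 < t := div_pos hs hr
  set u := ((k.1 + 1 : ℝ) + s * r) / (n + 1)
  have hu : u = ((k.1 + 1 : ℕ) : ℝ) * (1 + t) / (n + 1) := by
    have hrr : r * r = k.1 + 1 := Real.mul_self_sqrt (by positivity)
    simp only [u, t]
    field_simp
    push_cast
    linear_combination s * hrr
  set m := n - k.1
  have hevent : {ω | u ≤ (fun i => γ i ω) (Tuple.sort (fun i => γ i ω) k)}
      = {ω | (m : ℝ) ≤ #{i | γ i ω ∈ Ici u}} := by
    ext ω
    simp only [mem_ofPred_eq, mem_Ici, Nat.cast_le]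
    exact Tuple.le_apply_sort_iff_sub_le_card (fun i => γ i ω) u k
  have htail := measureReal_card_mem_ge_le_exp_mul hmeas hindep measurableSet_Ici
    (fun i =>
      measureReal_preimage_Ici_of_map_eq_uniform (hmeas i) (hunif i) (by positivity) hlt.le)
    (Real.log_nonneg (by linarith : 1 ≤ 1 + t)) m
  rw [Real.exp_log (by linarith), add_sub_cancel_left, Fintype.card_fin, hu] at htail
  have hK : ((k.1 + 1 : ℕ) : ℝ) * (1 + t) ≤ n + 1 := by
    rw [hu] at hlt
    exact (div_lt_one (by positivity)).1 hlt |>.le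
  rw [hevent, hu, ← ofReal_measureReal]
  exact ENNReal.ofReal_le_ofReal
    (htail.trans (exp_neg_log_one_add_mul_mul_pow_le (by omega) ht hK))
end
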